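/- arXiv:1301.2166 — 2 statements merged into one kernel-verified Lean document; each statement's English description precedes it below -/
import Mathlib

section
/- For fixed a > 0 and u ∈ ℂ^m with |u| < a/√N, the function f_N(u) = N log(1 + |u|²) satisfies: for every k ≥ 2, sup over the ball of the norms of all k-th order real partial derivatives of f_N is O(N) when k is even and O(√N) when k is odd, and moreover these bounds are sharp (achieved up to constants) for k even and for k ∈ {1,3}. -/
open Filter

noncomputable def fFS (m N : ℕ) (u : EuclideanSpace ℂ (Fin m)) : ℝ :=
  (N : ℝ) * Real.log (1 + ‖u‖ ^ 2)

/-!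
Since `f_N = N • f_1`, every derivative of `f_N` is `N` times the same derivative of the fixed
smooth function `f_1(u) = log (1 + ‖u‖²)`. On the ball of radius `a / √N ≤ a` these are bounded by
compactness, which gives `O(N)`. As `f_1` is even, its odd-order derivatives vanish at the origin,
so by the mean value inequality they are `O(‖u‖) = O(1 / √N)` on the ball, which gives `O(√N)`.

For sharpness, restrict to a complex line `t ↦ t • e`, `‖e‖ = 1`, on which `f_1` is
`φ(t) = log (1 + t²)`, with `φ⁽ᵏ⁾(t) = Re (2 (-1)ᵏ⁻¹ (k-1)! (t + i)⁻ᵏ)`. For even `k` this is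
nonzero at `0`. For odd `k`, `φ⁽ᵏ⁾(0) = 0` and `φ⁽ᵏ⁺¹⁾(0) ≠ 0`, so `|φ⁽ᵏ⁾(t)| ≍ t` near `0`,
and at `t = a / (2√N)` we get `N |φ⁽ᵏ⁾(t)| ≍ √N`.
-/

open Metric Topology

section

variable {E F : Type*} [NormedAddCommGroup E] [NormedSpace ℝ E]
  [NormedAddCommGroup F] [NormedSpace ℝ F] {f : E → F} {k : ℕ}

theorem iteratedFDeriv_zero_eq_zero_of_even_of_odd (hf : ContDiff ℝ k f)
    (heven : ∀ x, f (-x) = f x) (hk : Odd k) : iteratedFDeriv ℝ k f 0 = 0 := by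
  have h := congrFun (iteratedFDeriv_comp_const_smul (-1 : ℝ) hf) 0
  simp only [neg_one_smul, heven, neg_zero, hk.neg_one_pow] at h
  have h2 : (2 : ℝ) • iteratedFDeriv ℝ k f 0 = 0 := by
    rw [two_smul]; nth_rewrite 1 [h]; exact neg_add_cancel _
  exact (smul_eq_zero.mp h2).resolve_left two_ne_zero

theorem norm_iteratedDeriv_comp_smul_le (hf : ContDiff ℝ k f) (e : E) (t : ℝ) :
    ‖iteratedDeriv k (fun s : ℝ => f (s • e)) t‖ ≤
      ‖iteratedFDeriv ℝ k f (t • e)‖ * ‖e‖ ^ k := by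
  let L : ℝ →L[ℝ] E := (ContinuousLinearMap.id ℝ ℝ).smulRight e
  have hL : ∀ s, L s = s • e := fun s => rfl
  rw [iteratedDeriv_eq_iteratedFDeriv, show (fun s : ℝ => f (s • e)) = f ∘ L from rfl,
    L.iteratedFDeriv_comp_right hf t le_rfl,
    ContinuousMultilinearMap.compContinuousLinearMap_apply]
  simpa [hL] using (iteratedFDeriv ℝ k f (t • e)).le_opNorm fun _ => e

theorem exists_norm_iteratedFDeriv_le_mul_norm_of_even_of_odd [ProperSpace E]
    (hf : ContDiff ℝ (k + 1) f) (heven : ∀ x, f (-x) = f x) (hk : Odd k) (r : ℝ) :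
    ∃ C, ∀ u ∈ closedBall (0 : E) r, ‖iteratedFDeriv ℝ k f u‖ ≤ C * ‖u‖ := by
  obtain ⟨C, hC⟩ := (isCompact_closedBall (0 : E) r).exists_bound_of_continuousOn
    (hf.continuous_iteratedFDeriv le_rfl).continuousOn
  refine ⟨C, fun u hu => ?_⟩
  have hdiff : Differentiable ℝ (iteratedFDeriv ℝ k f) :=
    hf.differentiable_iteratedFDeriv (by exact_mod_cast Nat.lt_succ_self k)
  have h0 : (0 : E) ∈ closedBall (0 : E) r :=
    mem_closedBall_self ((norm_nonneg u).trans (mem_closedBall_zero_iff.mp hu))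
  have hmvt := (convex_closedBall (0 : E) r).norm_image_sub_le_of_norm_fderiv_le
    (fun x _ => hdiff.differentiableAt)
    (fun x hx => norm_fderiv_iteratedFDeriv.trans_le (hC x hx)) h0 hu
  rwa [iteratedFDeriv_zero_eq_zero_of_even_of_odd (hf.of_le (by norm_cast; omega)) heven hk,
    sub_zero, sub_zero] at hmvt

end

theorem HasDerivAt.eventually_abs_mul_div_two_le_abs {g : ℝ → ℝ} {d : ℝ}
    (hg : HasDerivAt g d 0) (hg0 : g 0 = 0) : ∀ᶠ t in 𝓝 0, |d| * |t| / 2 ≤ |g t| := by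
  rcases eq_or_ne d 0 with rfl | hd
  · simp
  filter_upwards [hg.isLittleO.def (half_pos (abs_pos.mpr hd))] with t ht
  simp only [hg0, sub_zero, smul_eq_mul, Real.norm_eq_abs] at ht
  have := abs_sub_abs_le_abs_sub (t * d) (g t)
  rw [abs_sub_comm, abs_mul] at this
  linarith

theorem le_of_lt_div_sqrt {N : ℕ} (hN : 1 ≤ N) {a x : ℝ} (ha : 0 < a) (hx : x < a / √N) :
    x ≤ a :=
  hx.le.trans (div_le_self ha.le (Real.one_le_sqrt.2 (by exact_mod_cast hN)))

open Complex in
/-- The case `n = 0` is `2t / (1 + t²) = 1 / (t + i) + 1 / (t - i) = 2 Re (1 / (t + i))`. -/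
theorem iteratedDeriv_succ_log_one_add_sq (n : ℕ) (t : ℝ) :
    iteratedDeriv (n + 1) (fun s : ℝ => Real.log (1 + s ^ 2)) t =
      ((2 * (-1) ^ n * n.factorial : ℂ) * (t + I) ^ (-(n + 1 : ℤ))).re := by
  induction n generalizing t with
  | zero =>
    have h : HasDerivAt (fun s : ℝ => Real.log (1 + s ^ 2)) (2 * t / (1 + t ^ 2)) t := by
      simpa using ((hasDerivAt_pow 2 t).const_add 1).log (by positivity)
    have hnormSq : ((t : ℂ) + I).normSq = 1 + t ^ 2 := by simp [normSq_apply]; ring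
    rw [iteratedDeriv_one, h.deriv]
    simp only [pow_zero, mul_one, Nat.factorial_zero, Nat.cast_one, CharP.cast_eq_zero, zero_add,
      zpow_neg_one, mul_re, re_ofNat, im_ofNat, inv_re, inv_im, add_re, add_im, ofReal_re,
      ofReal_im, I_re, I_im, hnormSq]
    ring
  | succ n ih =>
    have hI : (t : ℂ) + I ≠ 0 := fun h => by simpa using congrArg im h
    have h : HasDerivAt (fun z : ℂ => (2 * (-1) ^ n * n.factorial : ℂ) * (z + I) ^ (-(n + 1 : ℤ)))
        ((2 * (-1) ^ n * n.factorial : ℂ) * ((-(n + 1 : ℤ) : ℂ) * (t + I) ^ (-(n + 1 : ℤ) - 1)))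
        t := by
      simpa using ((hasDerivAt_zpow (-(n + 1 : ℤ)) _ (Or.inl hI)).comp (t : ℂ)
        ((hasDerivAt_id (t : ℂ)).add_const I)).const_mul (2 * (-1) ^ n * n.factorial : ℂ)
    rw [iteratedDeriv_succ, funext ih, h.real_of_complex.deriv]
    congr 1
    push_cast [Nat.factorial_succ]
    ring_nf

open Complex in
theorem iteratedDeriv_log_one_add_sq_zero_ne_zero {k : ℕ} (hk : Even k) (hk0 : k ≠ 0) :
    iteratedDeriv k (fun s : ℝ => Real.log (1 + s ^ 2)) 0 ≠ 0 := by
  obtain ⟨n, rfl⟩ := Nat.exists_eq_succ_of_ne_zero hk0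
  obtain ⟨j, hj⟩ := hk
  have hIpow : I ^ (-(n + 1 : ℤ)) = (((-1) ^ j)⁻¹ : ℝ) := by
    rw [show (-(n + 1 : ℤ)) = -((j + j : ℕ) : ℤ) by omega, zpow_neg, zpow_natCast, ← two_mul,
      pow_mul, I_sq]
    push_cast; rfl
  rw [iteratedDeriv_succ_log_one_add_sq, ofReal_zero, zero_add, hIpow]
  norm_cast
  simp [Nat.factorial_ne_zero]

theorem EuclideanSpace.exists_norm_eq_one {m : ℕ} (hm : 1 ≤ m) :
    ∃ e : EuclideanSpace ℂ (Fin m), ‖e‖ = 1 :=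
  ⟨EuclideanSpace.single ⟨0, hm⟩ 1, by simp⟩

theorem contDiff_fFS (m N : ℕ) {n : WithTop ℕ∞} : ContDiff ℝ n (fFS m N) :=
  contDiff_const.mul ((contDiff_const.add (contDiff_norm_sq ℂ)).log fun _ => by positivity)

theorem fFS_neg (m N : ℕ) (u : EuclideanSpace ℂ (Fin m)) : fFS m N (-u) = fFS m N u := by
  simp [fFS]

theorem fFS_eq_smul (m N : ℕ) : fFS m N = (N : ℝ) • fFS m 1 := by
  ext u; simp [fFS]

theorem norm_iteratedFDeriv_fFS (m N k : ℕ) (u : EuclideanSpace ℂ (Fin m)) :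
    ‖iteratedFDeriv ℝ k (fFS m N) u‖ = N * ‖iteratedFDeriv ℝ k (fFS m 1) u‖ := by
  rw [fFS_eq_smul m N, iteratedFDeriv_const_smul_apply (contDiff_fFS m 1).contDiffAt, norm_smul,
    Real.norm_natCast]

theorem abs_iteratedDeriv_log_one_add_sq_le {m : ℕ} {e : EuclideanSpace ℂ (Fin m)}
    (he : ‖e‖ = 1) (k : ℕ) (t : ℝ) :
    |iteratedDeriv k (fun s : ℝ => Real.log (1 + s ^ 2)) t| ≤
      ‖iteratedFDeriv ℝ k (fFS m 1) (t • e)‖ := by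
  have hline : (fun s : ℝ => fFS m 1 (s • e)) = fun s => Real.log (1 + s ^ 2) := by
    ext s; simp [fFS, norm_smul, he]
  simpa [hline, he] using norm_iteratedDeriv_comp_smul_le (contDiff_fFS m 1) e t (k := k)

theorem exists_norm_iteratedFDeriv_fFS_le (m k : ℕ) {a : ℝ} (ha : 0 < a) :
    ∃ C > 0, ∀ N : ℕ, 1 ≤ N → ∀ u : EuclideanSpace ℂ (Fin m), ‖u‖ < a / √N →
      ‖iteratedFDeriv ℝ k (fFS m N) u‖ ≤ C * N := by
  obtain ⟨C, hC⟩ :=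
    (isCompact_closedBall (0 : EuclideanSpace ℂ (Fin m)) a).exists_bound_of_continuousOn
      ((contDiff_fFS m 1 (n := k)).continuous_iteratedFDeriv le_rfl).continuousOn
  refine ⟨max C 1, by positivity, fun N hN u hu => ?_⟩
  rw [norm_iteratedFDeriv_fFS, mul_comm]
  gcongr
  exact (hC u (mem_closedBall_zero_iff.2 (le_of_lt_div_sqrt hN ha hu))).trans (le_max_left _ _)

theorem exists_norm_iteratedFDeriv_fFS_le_of_odd (m : ℕ) {k : ℕ} (hk : Odd k) {a : ℝ}
    (ha : 0 < a) :
    ∃ C > 0, ∀ N : ℕ, 1 ≤ N → ∀ u : EuclideanSpace ℂ (Fin m), ‖u‖ < a / √N →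
      ‖iteratedFDeriv ℝ k (fFS m N) u‖ ≤ C * √N := by
  obtain ⟨C, hC⟩ :=
    exists_norm_iteratedFDeriv_le_mul_norm_of_even_of_odd (contDiff_fFS m 1) (fFS_neg m 1) hk a
  refine ⟨max C 1 * a, by positivity, fun N hN u hu => ?_⟩
  have hsqrt : 0 < √(N : ℝ) := Real.sqrt_pos.2 (by exact_mod_cast hN)
  calc ‖iteratedFDeriv ℝ k (fFS m N) u‖ = N * ‖iteratedFDeriv ℝ k (fFS m 1) u‖ :=
        norm_iteratedFDeriv_fFS m N k u
    _ ≤ N * (max C 1 * (a / √N)) := by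
        gcongr
        calc _ ≤ C * ‖u‖ := hC u (mem_closedBall_zero_iff.2 (le_of_lt_div_sqrt hN ha hu))
          _ ≤ max C 1 * (a / √N) := by
            gcongr
            exact le_max_left _ _
    _ = max C 1 * a * √N := by
        field_simp
        rw [Real.sq_sqrt (Nat.cast_nonneg _)]

theorem exists_mul_le_norm_iteratedFDeriv_fFS_zero {m : ℕ} (hm : 1 ≤ m) {k : ℕ} (hk : Even k)
    (hk0 : k ≠ 0) : ∃ c > 0, ∀ N : ℕ, c * N ≤ ‖iteratedFDeriv ℝ k (fFS m N) 0‖ := by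
  obtain ⟨e, he⟩ := EuclideanSpace.exists_norm_eq_one hm
  refine ⟨_, abs_pos.2 (iteratedDeriv_log_one_add_sq_zero_ne_zero hk hk0), fun N => ?_⟩
  rw [norm_iteratedFDeriv_fFS, mul_comm]
  gcongr
  simpa using abs_iteratedDeriv_log_one_add_sq_le he k 0

theorem exists_mul_sqrt_le_norm_iteratedFDeriv_fFS_of_odd {m : ℕ} (hm : 1 ≤ m) {a : ℝ}
    (ha : 0 < a) {k : ℕ} (hk : Odd k) :
    ∃ c > 0, ∀ᶠ N : ℕ in atTop, ∃ u : EuclideanSpace ℂ (Fin m), ‖u‖ < a / √N ∧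
      c * √N ≤ ‖iteratedFDeriv ℝ k (fFS m N) u‖ := by
  obtain ⟨e, he⟩ := EuclideanSpace.exists_norm_eq_one hm
  set φ : ℝ → ℝ := fun s => Real.log (1 + s ^ 2)
  set d := iteratedDeriv (k + 1) φ 0
  have hg0 : iteratedDeriv k φ 0 = 0 := by
    have := abs_iteratedDeriv_log_one_add_sq_le he k 0
    rwa [zero_smul, iteratedFDeriv_zero_eq_zero_of_even_of_odd (contDiff_fFS m 1) (fFS_neg m 1) hk,
      norm_zero, abs_nonpos_iff] at this
  have hg : HasDerivAt (iteratedDeriv k φ) d 0 := by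
    have hφ : ContDiff ℝ (k + 1) φ :=
      (contDiff_const.add (contDiff_id.pow 2)).log fun s => by positivity
    rw [show d = deriv (iteratedDeriv k φ) 0 from congrFun iteratedDeriv_succ 0]
    exact (hφ.differentiable_iteratedDeriv k (by exact_mod_cast Nat.lt_succ_self k) 0).hasDerivAt
  have hd : d ≠ 0 := iteratedDeriv_log_one_add_sq_zero_ne_zero hk.add_one (by omega)
  have ht : Tendsto (fun N : ℕ => a / (2 * √N)) atTop (𝓝 0) :=
    tendsto_const_nhds.div_atTop <|
      (Real.tendsto_sqrt_atTop.comp tendsto_natCast_atTop_atTop).const_mul_atTop two_pos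
  refine ⟨|d| * a / 4, by positivity, ?_⟩
  filter_upwards [ht.eventually (hg.eventually_abs_mul_div_two_le_abs hg0),
    eventually_ge_atTop 1] with N hN hN1
  have hsqrt : 0 < √(N : ℝ) := Real.sqrt_pos.2 (by exact_mod_cast hN1)
  refine ⟨(a / (2 * √N)) • e, ?_, ?_⟩
  · rw [norm_smul, he, mul_one, Real.norm_of_nonneg (by positivity)]
    gcongr
    linarith
  · calc |d| * a / 4 * √N = N * (|d| * |a / (2 * √N)| / 2) := by
          rw [abs_of_pos (div_pos ha (mul_pos two_pos hsqrt))]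
          field_simp
          rw [Real.sq_sqrt (Nat.cast_nonneg _)]
          ring
      _ ≤ N * ‖iteratedFDeriv ℝ k (fFS m 1) ((a / (2 * √N)) • e)‖ := by
          gcongr
          exact hN.trans (abs_iteratedDeriv_log_one_add_sq_le he k _)
      _ = ‖iteratedFDeriv ℝ k (fFS m N) ((a / (2 * √N)) • e)‖ :=
          (norm_iteratedFDeriv_fFS m N k _).symm

/-- On the ball `‖u‖ < a/√N`, the `k`-th order (real) derivatives of
`f_N(u) = N log(1+|u|²)` are `O(N)` for `k` even and `O(√N)` for `k` odd, and
these bounds are sharp (achieved up to constants) for `k` even and `k ∈ {1,3}`. -/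
theorem stmt8 (m : ℕ) (hm : 1 ≤ m) (a : ℝ) (ha : 0 < a) :
    (∀ k : ℕ, 1 ≤ k → ∃ C > 0, ∀ N : ℕ, 1 ≤ N → ∀ u : EuclideanSpace ℂ (Fin m),
        ‖u‖ < a / Real.sqrt N →
        ‖iteratedFDeriv ℝ k (fFS m N) u‖ ≤
          C * (if Even k then (N : ℝ) else Real.sqrt N)) ∧
    (∀ k : ℕ, 2 ≤ k → Even k → ∃ c > 0, ∀ᶠ N : ℕ in atTop,
        ∃ u : EuclideanSpace ℂ (Fin m), ‖u‖ < a / Real.sqrt N ∧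
          c * (N : ℝ) ≤ ‖iteratedFDeriv ℝ k (fFS m N) u‖) ∧
    (∀ k ∈ ({1, 3} : Set ℕ), ∃ c > 0, ∀ᶠ N : ℕ in atTop,
        ∃ u : EuclideanSpace ℂ (Fin m), ‖u‖ < a / Real.sqrt N ∧
          c * Real.sqrt N ≤ ‖iteratedFDeriv ℝ k (fFS m N) u‖) := by
  refine ⟨fun k _ => ?_, fun k hk2 hk => ?_, fun k hk => ?_⟩
  · rcases Nat.even_or_odd k with hke | hko
    · obtain ⟨C, hC, hbound⟩ := exists_norm_iteratedFDeriv_fFS_le m k ha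
      exact ⟨C, hC, fun N hN u hu => by simpa only [if_pos hke] using hbound N hN u hu⟩
    · obtain ⟨C, hC, hbound⟩ := exists_norm_iteratedFDeriv_fFS_le_of_odd m hko ha
      refine ⟨C, hC, fun N hN u hu => ?_⟩
      simpa only [if_neg (Nat.not_even_iff_odd.2 hko)] using hbound N hN u hu
  · obtain ⟨c, hc, hbound⟩ := exists_mul_le_norm_iteratedFDeriv_fFS_zero hm hk (by omega)
    refine ⟨c, hc, eventually_atTop.2 ⟨1, fun N hN => ⟨0, ?_, hbound N⟩⟩⟩
    rw [norm_zero]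
    exact div_pos ha (Real.sqrt_pos.2 (by exact_mod_cast hN))
  · rcases hk with rfl | rfl
    exacts [exists_mul_sqrt_le_norm_iteratedFDeriv_fFS_of_odd hm ha odd_one,
      exists_mul_sqrt_le_norm_iteratedFDeriv_fFS_of_odd hm ha (by decide)]
end

section
/- Using K-coordinates of order 4 at z_0 (the Kähler potential satisfies φ(z) = |z|² + O(|z|⁵) except for terms z^J z̄^K with |J|,|K| ≥ 2), the sixth mixed derivative of the potential satisfies ∂⁶φ/∂z_i ∂z_k ∂z_s ∂z̄_j ∂z̄_l ∂z̄_t (z_0) = -R_{i j̄ k l̄, s t̄} + R_{p j̄ k l̄} R_{i p̄ s t̄} + R_{i j̄ p l̄} R_{k p̄ s t̄} + R_{i p̄ k t̄} R_{p j̄ s l̄}, all evaluated at z_0 (summation over p). -/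
/-- Wirtinger derivative `∂/∂z_j` of a function on `ℂ^m` (real-differentiable). -/
noncomputable def wdz (m : ℕ) (j : Fin m) (f : (Fin m → ℂ) → ℂ) : (Fin m → ℂ) → ℂ :=
  fun w => (1 / 2) * (fderiv ℝ f w (Pi.single j 1) - Complex.I * fderiv ℝ f w (Pi.single j Complex.I))

/-- Wirtinger derivative `∂/∂z̄_j`. -/
noncomputable def wdzbar (m : ℕ) (j : Fin m) (f : (Fin m → ℂ) → ℂ) : (Fin m → ℂ) → ℂ :=
  fun w => (1 / 2) * (fderiv ℝ f w (Pi.single j 1) + Complex.I * fderiv ℝ f w (Pi.single j Complex.I))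

namespace Stmt11Aux

noncomputable def Wop (m : ℕ) (j : Fin m) (c : ℂ) (f : (Fin m → ℂ) → ℂ) : (Fin m → ℂ) → ℂ :=
  fun w => (1 / 2) * (fderiv ℝ f w (Pi.single j 1) + c * fderiv ℝ f w (Pi.single j Complex.I))

lemma wdz_eq (m : ℕ) (j : Fin m) : wdz m j = Wop m j (-Complex.I) := by
  funext f w; simp only [wdz, Wop]; ring

lemma wdzbar_eq (m : ℕ) (j : Fin m) : wdzbar m j = Wop m j Complex.I := rfl

variable {m : ℕ}

lemma Dop_contDiff {f : (Fin m → ℂ) → ℂ} (hf : ContDiff ℝ (⊤ : ℕ∞) f) (v : Fin m → ℂ) :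
    ContDiff ℝ (⊤ : ℕ∞) (fun w => fderiv ℝ f w v) :=
  (hf.fderiv_right (by simp)).clm_apply contDiff_const

lemma Wop_contDiff {f : (Fin m → ℂ) → ℂ} (hf : ContDiff ℝ (⊤ : ℕ∞) f) (j : Fin m) (c : ℂ) :
    ContDiff ℝ (⊤ : ℕ∞) (Wop m j c f) := by
  unfold Wop
  exact contDiff_const.mul ((Dop_contDiff hf _).add (contDiff_const.mul (Dop_contDiff hf _)))

lemma cdiff {f : (Fin m → ℂ) → ℂ} (hf : ContDiff ℝ (⊤ : ℕ∞) f) (w : Fin m → ℂ) :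
    DifferentiableAt ℝ f w := (hf.differentiable (by simp)).differentiableAt

lemma Wop_add {f g : (Fin m → ℂ) → ℂ} {w : Fin m → ℂ} (hf : DifferentiableAt ℝ f w)
    (hg : DifferentiableAt ℝ g w) (j : Fin m) (c : ℂ) :
    Wop m j c (fun x => f x + g x) w = Wop m j c f w + Wop m j c g w := by
  simp only [Wop, fderiv_fun_add hf hg, ContinuousLinearMap.add_apply]; ring

lemma Wop_neg {f : (Fin m → ℂ) → ℂ} {w : Fin m → ℂ} (j : Fin m) (c : ℂ) :
    Wop m j c (fun x => -f x) w = -Wop m j c f w := by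
  simp only [Wop, fderiv_fun_neg, ContinuousLinearMap.neg_apply]; ring

lemma Wop_sub {f g : (Fin m → ℂ) → ℂ} {w : Fin m → ℂ} (hf : DifferentiableAt ℝ f w)
    (hg : DifferentiableAt ℝ g w) (j : Fin m) (c : ℂ) :
    Wop m j c (fun x => f x - g x) w = Wop m j c f w - Wop m j c g w := by
  simp only [Wop, fderiv_fun_sub hf hg, ContinuousLinearMap.sub_apply]; ring

lemma Wop_mul {f g : (Fin m → ℂ) → ℂ} {w : Fin m → ℂ} (hf : DifferentiableAt ℝ f w)
    (hg : DifferentiableAt ℝ g w) (j : Fin m) (c : ℂ) :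
    Wop m j c (fun x => f x * g x) w = Wop m j c f w * g w + f w * Wop m j c g w := by
  simp only [Wop, fderiv_fun_mul hf hg, ContinuousLinearMap.add_apply,
    ContinuousLinearMap.smul_apply, smul_eq_mul]; ring

lemma Wop_const {w : Fin m → ℂ} (j : Fin m) (c a : ℂ) :
    Wop m j c (fun _ => a) w = 0 := by
  simp [Wop]

lemma Wop_sum {ι : Type*} {s : Finset ι} {f : ι → (Fin m → ℂ) → ℂ} {w : Fin m → ℂ}
    (hf : ∀ p ∈ s, DifferentiableAt ℝ (f p) w) (j : Fin m) (c : ℂ) :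
    Wop m j c (fun x => ∑ p ∈ s, f p x) w = ∑ p ∈ s, Wop m j c (f p) w := by
  simp only [Wop, fderiv_fun_sum hf, ContinuousLinearMap.coe_sum', Finset.sum_apply,
    Finset.mul_sum, ← Finset.sum_add_distrib]

lemma Wop_mul3 {A B C : (Fin m → ℂ) → ℂ} (hA : ContDiff ℝ (⊤ : ℕ∞) A) (hB : ContDiff ℝ (⊤ : ℕ∞) B)
    (hC : ContDiff ℝ (⊤ : ℕ∞) C) (j : Fin m) (c : ℂ) (w : Fin m → ℂ) :
    Wop m j c (fun x => A x * B x * C x) w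
      = Wop m j c A w * B w * C w + A w * Wop m j c B w * C w
        + A w * B w * Wop m j c C w := by
  rw [Wop_mul (cdiff (hA.mul hB) w) (cdiff hC w), Wop_mul (cdiff hA w) (cdiff hB w)]; ring

lemma Dop_comm {f : (Fin m → ℂ) → ℂ} (hf : ContDiff ℝ (⊤ : ℕ∞) f) (u v : Fin m → ℂ) (w : Fin m → ℂ) :
    fderiv ℝ (fun x => fderiv ℝ f x v) w u = fderiv ℝ (fun x => fderiv ℝ f x u) w v := by
  have hd : DifferentiableAt ℝ (fderiv ℝ f) w :=
    (((hf.fderiv_right (by simp) : ContDiff ℝ (⊤ : ℕ∞) (fderiv ℝ f))).differentiable (by simp)).differentiableAt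
  have key : ∀ a : Fin m → ℂ, ∀ b : Fin m → ℂ,
      fderiv ℝ (fun x => fderiv ℝ f x a) w b = fderiv ℝ (fderiv ℝ f) w b a := by
    intro a b
    rw [fderiv_clm_apply hd (differentiableAt_const a)]
    simp
  rw [key, key, (hf.contDiffAt.isSymmSndFDerivAt (by simp; exact WithTop.coe_le_coe.mpr le_top)).eq]

lemma Wop_fderiv {f : (Fin m → ℂ) → ℂ} (hf : ContDiff ℝ (⊤ : ℕ∞) f) (k : Fin m) (d : ℂ)
    (w v : Fin m → ℂ) :
    fderiv ℝ (Wop m k d f) w v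
      = (1 / 2) * (fderiv ℝ (fun x => fderiv ℝ f x (Pi.single k 1)) w v
          + d * fderiv ℝ (fun x => fderiv ℝ f x (Pi.single k Complex.I)) w v) := by
  have h1 : DifferentiableAt ℝ (fun x => fderiv ℝ f x (Pi.single k 1)) w :=
    ((Dop_contDiff hf _).differentiable (by simp)).differentiableAt
  have h2 : DifferentiableAt ℝ (fun x => fderiv ℝ f x (Pi.single k Complex.I)) w :=
    ((Dop_contDiff hf _).differentiable (by simp)).differentiableAt
  have : Wop m k d f = fun x => (1 / 2) * (fderiv ℝ f x (Pi.single k 1)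
      + d * fderiv ℝ f x (Pi.single k Complex.I)) := rfl
  rw [this, fderiv_const_mul (h1.fun_add (h2.const_mul d)), fderiv_fun_add h1 (h2.const_mul d),
    fderiv_const_mul h2]
  simp only [ContinuousLinearMap.smul_apply, ContinuousLinearMap.add_apply, smul_eq_mul]

lemma Wop_comm {f : (Fin m → ℂ) → ℂ} (hf : ContDiff ℝ (⊤ : ℕ∞) f) (j k : Fin m) (c d : ℂ) :
    Wop m j c (Wop m k d f) = Wop m k d (Wop m j c f) := by
  funext w
  simp only [Wop, Wop_fderiv hf]
  rw [Dop_comm hf (Pi.single j 1) (Pi.single k 1),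
      Dop_comm hf (Pi.single j 1) (Pi.single k Complex.I),
      Dop_comm hf (Pi.single j Complex.I) (Pi.single k 1),
      Dop_comm hf (Pi.single j Complex.I) (Pi.single k Complex.I)]
  ring

lemma contDiff_finset_prod {ι : Type*} [DecidableEq ι] (s : Finset ι)
    (f : ι → (Fin m → ℂ) → ℂ) (hf : ∀ i, ContDiff ℝ (⊤ : ℕ∞) (f i)) :
    ContDiff ℝ (⊤ : ℕ∞) (fun x => ∏ i ∈ s, f i x) := by
  induction s using Finset.induction with
  | empty => simpa using contDiff_const
  | insert _ _ h ih => simp only [Finset.prod_insert h]; exact (hf _).mul ih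

lemma contDiff_det (M : (Fin m → ℂ) → Matrix (Fin m) (Fin m) ℂ)
    (hM : ∀ p q, ContDiff ℝ (⊤ : ℕ∞) (fun x => M x p q)) :
    ContDiff ℝ (⊤ : ℕ∞) (fun x => (M x).det) := by
  classical
  have : (fun x => (M x).det)
      = fun x => ∑ σ : Equiv.Perm (Fin m), (Equiv.Perm.sign σ : ℂ) * ∏ i, M x (σ i) i := by
    funext x; rw [Matrix.det_apply']
  rw [this]
  exact ContDiff.sum fun σ _ =>
    contDiff_const.mul (contDiff_finset_prod _ _ fun i => hM _ _)

lemma ginv_contDiff (g ginv : Fin m → Fin m → (Fin m → ℂ) → ℂ)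
    (hgs : ∀ i j, ContDiff ℝ (⊤ : ℕ∞) (g i j))
    (hginv : ∀ p s w, (∑ q, ginv p q w * g s q w) = if p = s then 1 else 0) :
    ∀ p q, ContDiff ℝ (⊤ : ℕ∞) (ginv p q) := by
  classical
  set B : (Fin m → ℂ) → Matrix (Fin m) (Fin m) ℂ := fun w => Matrix.of fun p q => g q p w
    with hB
  have hBmul : ∀ w, (Matrix.of fun p q => ginv p q w) * B w = 1 := by
    intro w
    ext p s
    rw [Matrix.mul_apply, Matrix.one_apply]
    simpa only [hB, Matrix.of_apply] using hginv p s w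
  have hdet : ∀ w, (B w).det ≠ 0 := by
    intro w
    have h1 : (Matrix.of fun p q => ginv p q w).det * (B w).det = 1 := by
      rw [← Matrix.det_mul, hBmul w, Matrix.det_one]
    intro h; rw [h, mul_zero] at h1; exact zero_ne_one h1
  have hginv_eq : ∀ p q, ginv p q = fun w => ((B w).det)⁻¹ * (B w).adjugate p q := by
    intro p q; funext w
    have h2 : (B w)⁻¹ = Matrix.of fun p q => ginv p q w := Matrix.inv_eq_left_inv (hBmul w)
    have h3 : (B w)⁻¹ = Ring.inverse ((B w).det) • (B w).adjugate := Matrix.inv_def _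
    have h4 := congrArg (fun M => M p q) (h2.symm.trans h3)
    simpa [Ring.inverse_eq_inv', hdet w, Matrix.smul_apply, smul_eq_mul] using h4
  intro p q
  rw [hginv_eq p q]
  have hent : ∀ a b, ContDiff ℝ (⊤ : ℕ∞) (fun x => B x a b) := by
    intro a b; simpa [hB] using hgs b a
  have hdetC : ContDiff ℝ (⊤ : ℕ∞) (fun w => (B w).det) := contDiff_det _ hent
  have hadj : ContDiff ℝ (⊤ : ℕ∞) (fun w => (B w).adjugate p q) := by
    have h5 : (fun w => (B w).adjugate p q)
        = fun w => ((B w).updateRow q (Pi.single p 1)).det := by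
      funext w; rw [Matrix.adjugate_apply]
    rw [h5]
    apply contDiff_det
    intro a b
    by_cases h : a = q
    · subst h; simp only [Matrix.updateRow_self]; exact contDiff_const
    · simp only [Matrix.updateRow_ne h]; exact hent a b
  exact (hdetC.inv hdet).mul hadj

end Stmt11Aux

open Stmt11Aux in
/-- In K-coordinates of order 4 at `z₀ = 0` (so the metric is `δ`
at `0` and its first derivatives and second pure derivatives vanish at `0`), the
sixth mixed derivative of the Kähler potential satisfies
`∂⁶φ/∂z_i∂z_k∂z_s∂z̄_j∂z̄_l∂z̄_t(0)
  = -R_{ij̄kl̄,st̄} + R_{pj̄kl̄}R_{ip̄st̄} + R_{ij̄pl̄}R_{kp̄st̄} + R_{ip̄kt̄}R_{pj̄sl̄}`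
(summation over `p`), all evaluated at `0`.  Here `R_{ij̄kl̄,s}` is the unbarred
covariant derivative and `R_{ij̄kl̄,st̄}` its barred covariant derivative
(with conjugate Christoffel corrections on the barred indices `j, l`). -/
theorem stmt11 (m : ℕ) (φ : (Fin m → ℂ) → ℝ)
    (hφ : ContDiff ℝ (⊤ : ℕ∞) fun w => (φ w : ℂ))
    (g : Fin m → Fin m → (Fin m → ℂ) → ℂ)
    (hg : ∀ i j, g i j = wdz m i (wdzbar m j fun w => (φ w : ℂ)))
    (ginv : Fin m → Fin m → (Fin m → ℂ) → ℂ)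
    (hginv : ∀ p s w, (∑ q, ginv p q w * g s q w) = if p = s then 1 else 0)
    (hnorm0 : ∀ i j, g i j 0 = if i = j then 1 else 0)
    (hnorm1 : ∀ i j k, wdz m k (g i j) 0 = 0 ∧ wdzbar m k (g i j) 0 = 0)
    (hnorm2 : ∀ i j k s, wdz m s (wdz m k (g i j)) 0 = 0 ∧
      wdzbar m s (wdzbar m k (g i j)) 0 = 0)
    (Γ : Fin m → Fin m → Fin m → (Fin m → ℂ) → ℂ)
    (hΓ : ∀ p i s w, Γ p i s w = ∑ l, ginv p l w * wdz m s (g i l) w)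
    (R : Fin m → Fin m → Fin m → Fin m → (Fin m → ℂ) → ℂ)
    (hR : ∀ i j k l w, R i j k l w =
      -(wdz m k (wdzbar m l (g i j)) w) +
        ∑ p, ∑ q, ginv p q w * wdz m k (g i q) w * wdzbar m l (g p j) w)
    (Rcov : Fin m → Fin m → Fin m → Fin m → Fin m → (Fin m → ℂ) → ℂ)
    (hRcov : ∀ i j k l s w, Rcov i j k l s w =
      wdz m s (R i j k l) w - (∑ p, Γ p i s w * R p j k l w)
        - ∑ p, Γ p k s w * R i j p l w)
    (Rcov2 : Fin m → Fin m → Fin m → Fin m → Fin m → Fin m → (Fin m → ℂ) → ℂ)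
    (hRcov2 : ∀ i j k l s t w, Rcov2 i j k l s t w =
      wdzbar m t (Rcov i j k l s) w
        - (∑ p, starRingEnd ℂ (Γ p j t w) * Rcov i p k l s w)
        - ∑ p, starRingEnd ℂ (Γ p l t w) * Rcov i j k p s w) :
    ∀ i j k l s t,
      wdz m i (wdz m k (wdz m s (wdzbar m j (wdzbar m l (wdzbar m t
        fun w => (φ w : ℂ)))))) 0
      = -Rcov2 i j k l s t 0
        + ∑ p, (R p j k l 0 * R i p s t 0 + R i j p l 0 * R k p s t 0
          + R i p k t 0 * R p j s l 0) := by
  intro i j k l s t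
  classical
  simp only [wdz_eq, wdzbar_eq] at hg hnorm1 hnorm2 hΓ hR hRcov hRcov2 ⊢
  set ψ : (Fin m → ℂ) → ℂ := fun w => (φ w : ℂ) with hψdef
  -- basic smoothness
  have hgs : ∀ a b, ContDiff ℝ (⊤ : ℕ∞) (g a b) := by
    intro a b; rw [hg]; exact Wop_contDiff (Wop_contDiff hφ _ _) _ _
  have hginvs : ∀ p q, ContDiff ℝ (⊤ : ℕ∞) (ginv p q) := ginv_contDiff g ginv hgs hginv
  -- values of ginv at 0
  have hginv0 : ∀ p q, ginv p q 0 = if p = q then 1 else 0 := by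
    intro p q
    have h := hginv p q 0
    simp only [hnorm0, mul_ite, mul_one, mul_zero, Finset.sum_ite_eq, Finset.mem_univ,
      if_true] at h
    exact h
  -- first derivatives of g vanish at 0
  have hZg0 : ∀ a b k, Wop m k (-Complex.I) (g a b) 0 = 0 := fun a b k => (hnorm1 a b k).1
  have hYg0 : ∀ a b k, Wop m k Complex.I (g a b) 0 = 0 := fun a b k => (hnorm1 a b k).2
  have hgd : ∀ (c : ℂ), (c = Complex.I ∨ c = -Complex.I) →
      ∀ a b k, Wop m k c (g a b) 0 = 0 := by
    rintro c (rfl | rfl) a b k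
    exacts [hYg0 a b k, hZg0 a b k]
  -- first derivatives of ginv vanish at 0
  have hginvd : ∀ (c : ℂ), (c = Complex.I ∨ c = -Complex.I) →
      ∀ k p s, Wop m k c (ginv p s) 0 = 0 := by
    intro c hc k p s
    have hconst : (fun w => ∑ q, ginv p q w * g s q w)
        = fun _ => (if p = s then (1 : ℂ) else 0) := funext fun w => hginv p s w
    have h0 : Wop m k c (fun w => ∑ q, ginv p q w * g s q w) 0 = 0 := by
      rw [hconst]; exact Wop_const _ _ _
    rw [Wop_sum (fun q _ => cdiff ((hginvs p q).mul (hgs s q)) 0) k c] at h0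
    have hmul : ∀ q : Fin m, Wop m k c (fun w => ginv p q w * g s q w) 0
        = Wop m k c (ginv p q) 0 * g s q 0 + ginv p q 0 * Wop m k c (g s q) 0 :=
      fun q => Wop_mul (cdiff (hginvs p q) 0) (cdiff (hgs s q) 0) k c
    simp only [hmul, hnorm0, hgd c hc, mul_zero, add_zero, mul_ite, mul_one,
      Finset.sum_ite_eq, Finset.mem_univ, if_true] at h0
    exact h0
  have hZginv0 : ∀ k p q, Wop m k (-Complex.I) (ginv p q) 0 = 0 :=
    fun k p q => hginvd _ (Or.inr rfl) k p q
  have hYginv0 : ∀ k p q, Wop m k Complex.I (ginv p q) 0 = 0 :=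
    fun k p q => hginvd _ (Or.inl rfl) k p q
  -- curvature at 0 is the pure fourth derivative
  have hZY : ∀ a b k l, Wop m k (-Complex.I) (Wop m l Complex.I (g a b)) 0 = -R a b k l 0 := by
    intro a b k l
    have h := hR a b k l 0
    have hz : ∀ p q : Fin m,
        ginv p q 0 * Wop m k (-Complex.I) (g a q) 0 * Wop m l Complex.I (g p b) 0 = 0 := by
      intro p q; rw [hZg0]; ring
    simp only [hz, Finset.sum_const_zero, add_zero] at h
    rw [h]; ring
  have hYZ : ∀ a b k l, Wop m l Complex.I (Wop m k (-Complex.I) (g a b)) 0 = -R a b k l 0 := by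
    intro a b k l
    rw [Wop_comm (hgs a b) l k Complex.I (-Complex.I)]
    exact hZY a b k l
  -- Christoffel symbols
  have hΓfun : ∀ p a s', Γ p a s'
      = fun w => ∑ q, ginv p q w * Wop m s' (-Complex.I) (g a q) w :=
    fun p a s' => funext fun w => hΓ p a s' w
  have hΓs : ∀ p a s', ContDiff ℝ (⊤ : ℕ∞) (Γ p a s') := by
    intro p a s'; rw [hΓfun]
    exact ContDiff.sum fun q _ => (hginvs p q).mul (Wop_contDiff (hgs a q) _ _)
  have hΓ0 : ∀ p a s', Γ p a s' 0 = 0 := by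
    intro p a s'; rw [hΓ p a s' 0]
    simp only [hZg0, mul_zero, Finset.sum_const_zero]
  have hdΓ : ∀ p a s' t', Wop m t' Complex.I (Γ p a s') 0 = -R a p s' t' 0 := by
    intro p a s' t'
    rw [hΓfun p a s',
      Wop_sum (fun q _ => cdiff ((hginvs p q).mul (Wop_contDiff (hgs a q) _ _)) 0)]
    have hmul : ∀ q : Fin m,
        Wop m t' Complex.I (fun w => ginv p q w * Wop m s' (-Complex.I) (g a q) w) 0
          = Wop m t' Complex.I (ginv p q) 0 * Wop m s' (-Complex.I) (g a q) 0
            + ginv p q 0 * Wop m t' Complex.I (Wop m s' (-Complex.I) (g a q)) 0 :=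
      fun q => Wop_mul (cdiff (hginvs p q) 0) (cdiff (Wop_contDiff (hgs a q) _ _) 0) t' Complex.I
    simp only [hmul, hYginv0, zero_mul, hginv0, ite_mul, one_mul, zero_add,
      Finset.sum_ite_eq, Finset.mem_univ, if_true]
    exact hYZ a p s' t'
  -- curvature as a function
  have hRfun : ∀ a b k' l', R a b k' l' = fun w =>
      -(Wop m k' (-Complex.I) (Wop m l' Complex.I (g a b)) w)
        + ∑ p, ∑ q, ginv p q w * Wop m k' (-Complex.I) (g a q) w
            * Wop m l' Complex.I (g p b) w :=
    fun a b k' l' => funext fun w => hR a b k' l' w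
  have hRs : ∀ a b k' l', ContDiff ℝ (⊤ : ℕ∞) (R a b k' l') := by
    intro a b k' l'; rw [hRfun]
    exact ((Wop_contDiff (Wop_contDiff (hgs a b) _ _) _ _).neg).add
      (ContDiff.sum fun p _ => ContDiff.sum fun q _ =>
        ((hginvs p q).mul (Wop_contDiff (hgs a q) _ _)).mul (Wop_contDiff (hgs p b) _ _))
  -- first derivative of the curvature, as a function
  have htripC : ∀ p q : Fin m, ContDiff ℝ (⊤ : ℕ∞) (fun w =>
      ginv p q w * Wop m k (-Complex.I) (g i q) w * Wop m l Complex.I (g p j) w) :=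
    fun p q => ((hginvs p q).mul (Wop_contDiff (hgs i q) _ _)).mul (Wop_contDiff (hgs p j) _ _)
  have hdZR : Wop m s (-Complex.I) (R i j k l) = fun w =>
      -(Wop m s (-Complex.I) (Wop m k (-Complex.I) (Wop m l Complex.I (g i j))) w)
        + ∑ p, ∑ q,
          (Wop m s (-Complex.I) (ginv p q) w * Wop m k (-Complex.I) (g i q) w
              * Wop m l Complex.I (g p j) w
            + ginv p q w * Wop m s (-Complex.I) (Wop m k (-Complex.I) (g i q)) w
              * Wop m l Complex.I (g p j) w
            + ginv p q w * Wop m k (-Complex.I) (g i q) w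
              * Wop m s (-Complex.I) (Wop m l Complex.I (g p j)) w) := by
    funext w
    rw [hRfun i j k l]
    rw [Wop_add (cdiff (Wop_contDiff (Wop_contDiff (hgs i j) _ _) _ _).neg w)
        (cdiff (ContDiff.sum fun p _ => ContDiff.sum fun q _ => htripC p q) w)]
    rw [Wop_neg]
    rw [Wop_sum (fun p _ => cdiff (ContDiff.sum fun q _ => htripC p q) w)]
    have hq : ∀ p : Fin m, Wop m s (-Complex.I)
        (fun x => ∑ q, ginv p q x * Wop m k (-Complex.I) (g i q) x
            * Wop m l Complex.I (g p j) x) w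
        = ∑ q, Wop m s (-Complex.I) (fun x => ginv p q x * Wop m k (-Complex.I) (g i q) x
            * Wop m l Complex.I (g p j) x) w :=
      fun p => Wop_sum (fun q _ => cdiff (htripC p q) w) _ _
    simp only [hq]
    have hm3 : ∀ p q : Fin m, Wop m s (-Complex.I)
        (fun x => ginv p q x * Wop m k (-Complex.I) (g i q) x
            * Wop m l Complex.I (g p j) x) w
        = Wop m s (-Complex.I) (ginv p q) w * Wop m k (-Complex.I) (g i q) w
              * Wop m l Complex.I (g p j) w
          + ginv p q w * Wop m s (-Complex.I) (Wop m k (-Complex.I) (g i q)) w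
              * Wop m l Complex.I (g p j) w
          + ginv p q w * Wop m k (-Complex.I) (g i q) w
              * Wop m s (-Complex.I) (Wop m l Complex.I (g p j)) w := by
      intro p q
      rw [Wop_mul3 (hginvs p q) (Wop_contDiff (hgs i q) _ _) (Wop_contDiff (hgs p j) _ _)]
    simp only [hm3]
  -- second derivative of the curvature at 0
  have hT1 : ∀ p q : Fin m, ContDiff ℝ (⊤ : ℕ∞) (fun w =>
      Wop m s (-Complex.I) (ginv p q) w * Wop m k (-Complex.I) (g i q) w
        * Wop m l Complex.I (g p j) w) :=
    fun p q => ((Wop_contDiff (hginvs p q) _ _).mul (Wop_contDiff (hgs i q) _ _)).mul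
      (Wop_contDiff (hgs p j) _ _)
  have hT2 : ∀ p q : Fin m, ContDiff ℝ (⊤ : ℕ∞) (fun w =>
      ginv p q w * Wop m s (-Complex.I) (Wop m k (-Complex.I) (g i q)) w
        * Wop m l Complex.I (g p j) w) :=
    fun p q => ((hginvs p q).mul (Wop_contDiff (Wop_contDiff (hgs i q) _ _) _ _)).mul
      (Wop_contDiff (hgs p j) _ _)
  have hT3 : ∀ p q : Fin m, ContDiff ℝ (⊤ : ℕ∞) (fun w =>
      ginv p q w * Wop m k (-Complex.I) (g i q) w
        * Wop m s (-Complex.I) (Wop m l Complex.I (g p j)) w) :=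
    fun p q => ((hginvs p q).mul (Wop_contDiff (hgs i q) _ _)).mul
      (Wop_contDiff (Wop_contDiff (hgs p j) _ _) _ _)
  have hT : ∀ p q : Fin m, ContDiff ℝ (⊤ : ℕ∞) (fun w =>
      Wop m s (-Complex.I) (ginv p q) w * Wop m k (-Complex.I) (g i q) w
          * Wop m l Complex.I (g p j) w
        + ginv p q w * Wop m s (-Complex.I) (Wop m k (-Complex.I) (g i q)) w
          * Wop m l Complex.I (g p j) w
        + ginv p q w * Wop m k (-Complex.I) (g i q) w
          * Wop m s (-Complex.I) (Wop m l Complex.I (g p j)) w) :=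
    fun p q => ((hT1 p q).add (hT2 p q)).add (hT3 p q)
  have hE : Wop m t Complex.I (Wop m s (-Complex.I) (R i j k l)) 0
      = -(Wop m t Complex.I (Wop m s (-Complex.I) (Wop m k (-Complex.I)
            (Wop m l Complex.I (g i j)))) 0)
        + ∑ p, R i p k t 0 * R p j s l 0 := by
    rw [hdZR]
    have hA1 : ContDiff ℝ (⊤ : ℕ∞) (fun w =>
        -(Wop m s (-Complex.I) (Wop m k (-Complex.I) (Wop m l Complex.I (g i j))) w)) :=
      (Wop_contDiff (Wop_contDiff (Wop_contDiff (hgs i j) _ _) _ _) _ _).neg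
    rw [Wop_add (cdiff hA1 0)
        (cdiff (ContDiff.sum fun p _ => ContDiff.sum fun q _ => hT p q) 0)]
    rw [Wop_neg]
    rw [Wop_sum (fun p _ => cdiff (ContDiff.sum fun q _ => hT p q) 0)]
    have hq2 : ∀ p : Fin m, Wop m t Complex.I (fun x => ∑ q,
        (Wop m s (-Complex.I) (ginv p q) x * Wop m k (-Complex.I) (g i q) x
            * Wop m l Complex.I (g p j) x
          + ginv p q x * Wop m s (-Complex.I) (Wop m k (-Complex.I) (g i q)) x
            * Wop m l Complex.I (g p j) x
          + ginv p q x * Wop m k (-Complex.I) (g i q) x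
            * Wop m s (-Complex.I) (Wop m l Complex.I (g p j)) x)) 0
        = ∑ q, Wop m t Complex.I (fun x =>
          Wop m s (-Complex.I) (ginv p q) x * Wop m k (-Complex.I) (g i q) x
            * Wop m l Complex.I (g p j) x
          + ginv p q x * Wop m s (-Complex.I) (Wop m k (-Complex.I) (g i q)) x
            * Wop m l Complex.I (g p j) x
          + ginv p q x * Wop m k (-Complex.I) (g i q) x
            * Wop m s (-Complex.I) (Wop m l Complex.I (g p j)) x) 0 :=
      fun p => Wop_sum (fun q _ => cdiff (hT p q) 0) _ _
    simp only [hq2]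
    have hsplit : ∀ p q : Fin m, Wop m t Complex.I (fun x =>
        Wop m s (-Complex.I) (ginv p q) x * Wop m k (-Complex.I) (g i q) x
            * Wop m l Complex.I (g p j) x
          + ginv p q x * Wop m s (-Complex.I) (Wop m k (-Complex.I) (g i q)) x
            * Wop m l Complex.I (g p j) x
          + ginv p q x * Wop m k (-Complex.I) (g i q) x
            * Wop m s (-Complex.I) (Wop m l Complex.I (g p j)) x) 0
        = (if p = q then 1 else 0) * (R i q k t 0 * R p j s l 0) := by
      intro p q
      rw [Wop_add (cdiff ((hT1 p q).add (hT2 p q)) 0) (cdiff (hT3 p q) 0),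
        Wop_add (cdiff (hT1 p q) 0) (cdiff (hT2 p q) 0)]
      rw [Wop_mul3 (Wop_contDiff (hginvs p q) _ _) (Wop_contDiff (hgs i q) _ _)
          (Wop_contDiff (hgs p j) _ _),
        Wop_mul3 (hginvs p q) (Wop_contDiff (Wop_contDiff (hgs i q) _ _) _ _)
          (Wop_contDiff (hgs p j) _ _),
        Wop_mul3 (hginvs p q) (Wop_contDiff (hgs i q) _ _)
          (Wop_contDiff (Wop_contDiff (hgs p j) _ _) _ _)]
      rw [hZginv0, hZg0, hYg0, hginv0, hYZ i q k t, hZY p j s l]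
      rw [(hnorm2 i q k s).1]
      ring
    simp only [hsplit, ite_mul, one_mul, zero_mul, Finset.sum_ite_eq, Finset.mem_univ,
      if_true]
  -- derivative of covariant derivative at 0
  have hYRcov : Wop m t Complex.I (Rcov i j k l s) 0
      = Wop m t Complex.I (Wop m s (-Complex.I) (R i j k l)) 0
        + ∑ p, R i p s t 0 * R p j k l 0 + ∑ p, R k p s t 0 * R i j p l 0 := by
    have hRcovfun : Rcov i j k l s = fun w =>
        Wop m s (-Complex.I) (R i j k l) w - (∑ p, Γ p i s w * R p j k l w)
          - ∑ p, Γ p k s w * R i j p l w := funext fun w => hRcov i j k l s w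
    rw [hRcovfun]
    have hP1 : ContDiff ℝ (⊤ : ℕ∞) (fun w => ∑ p, Γ p i s w * R p j k l w) :=
      ContDiff.sum fun p _ => (hΓs p i s).mul (hRs p j k l)
    have hP2 : ContDiff ℝ (⊤ : ℕ∞) (fun w => ∑ p, Γ p k s w * R i j p l w) :=
      ContDiff.sum fun p _ => (hΓs p k s).mul (hRs i j p l)
    have hWsR : ContDiff ℝ (⊤ : ℕ∞) (Wop m s (-Complex.I) (R i j k l)) :=
      Wop_contDiff (hRs i j k l) _ _
    rw [Wop_sub (cdiff (hWsR.sub hP1) 0) (cdiff hP2 0), Wop_sub (cdiff hWsR 0) (cdiff hP1 0)]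
    rw [Wop_sum (fun p _ => cdiff ((hΓs p i s).mul (hRs p j k l)) 0),
      Wop_sum (fun p _ => cdiff ((hΓs p k s).mul (hRs i j p l)) 0)]
    have hm1 : ∀ p : Fin m, Wop m t Complex.I (fun w => Γ p i s w * R p j k l w) 0
        = Wop m t Complex.I (Γ p i s) 0 * R p j k l 0
          + Γ p i s 0 * Wop m t Complex.I (R p j k l) 0 :=
      fun p => Wop_mul (cdiff (hΓs p i s) 0) (cdiff (hRs p j k l) 0) t Complex.I
    have hm2 : ∀ p : Fin m, Wop m t Complex.I (fun w => Γ p k s w * R i j p l w) 0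
        = Wop m t Complex.I (Γ p k s) 0 * R i j p l 0
          + Γ p k s 0 * Wop m t Complex.I (R i j p l) 0 :=
      fun p => Wop_mul (cdiff (hΓs p k s) 0) (cdiff (hRs i j p l) 0) t Complex.I
    simp only [hm1, hm2, hΓ0, zero_mul, add_zero, hdΓ, neg_mul, Finset.sum_neg_distrib,
      sub_neg_eq_add]
  -- the doubly covariant derivative at 0
  have hRcov20 : Rcov2 i j k l s t 0 = Wop m t Complex.I (Rcov i j k l s) 0 := by
    rw [hRcov2 i j k l s t 0]
    simp only [hΓ0, map_zero, zero_mul, Finset.sum_const_zero, sub_zero]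
  -- reorder the sixth derivative
  have hrew : Wop m i (-Complex.I) (Wop m k (-Complex.I) (Wop m s (-Complex.I)
        (Wop m j Complex.I (Wop m l Complex.I (Wop m t Complex.I ψ)))))
      = Wop m t Complex.I (Wop m s (-Complex.I) (Wop m k (-Complex.I)
        (Wop m l Complex.I (g i j)))) := by
    rw [Wop_comm hφ l t Complex.I Complex.I]
    rw [Wop_comm (Wop_contDiff hφ l Complex.I) j t Complex.I Complex.I]
    rw [Wop_comm (Wop_contDiff (Wop_contDiff hφ l Complex.I) j Complex.I) s t
      (-Complex.I) Complex.I]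
    rw [Wop_comm (Wop_contDiff (Wop_contDiff (Wop_contDiff hφ l Complex.I) j Complex.I) s
      (-Complex.I)) k t (-Complex.I) Complex.I]
    rw [Wop_comm (Wop_contDiff (Wop_contDiff (Wop_contDiff (Wop_contDiff hφ l Complex.I)
      j Complex.I) s (-Complex.I)) k (-Complex.I)) i t (-Complex.I) Complex.I]
    rw [Wop_comm (Wop_contDiff (Wop_contDiff (Wop_contDiff hφ l Complex.I) j Complex.I) s
      (-Complex.I)) i k (-Complex.I) (-Complex.I)]
    rw [Wop_comm (Wop_contDiff (Wop_contDiff hφ l Complex.I) j Complex.I) i s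
      (-Complex.I) (-Complex.I)]
    rw [Wop_comm hφ j l Complex.I Complex.I]
    rw [Wop_comm (Wop_contDiff hφ j Complex.I) i l (-Complex.I) Complex.I]
    rw [Wop_comm (Wop_contDiff (Wop_contDiff (Wop_contDiff hφ j Complex.I) i
      (-Complex.I)) l Complex.I) k s (-Complex.I) (-Complex.I)]
    rw [← hg i j]
  rw [hrew, hRcov20, hYRcov, hE]
  have hsum3 : ∑ p, (R p j k l 0 * R i p s t 0 + R i j p l 0 * R k p s t 0
      + R i p k t 0 * R p j s l 0)
      = ((∑ p, R p j k l 0 * R i p s t 0) + ∑ p, R i j p l 0 * R k p s t 0)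
        + ∑ p, R i p k t 0 * R p j s l 0 := by
    rw [Finset.sum_add_distrib, Finset.sum_add_distrib]
  rw [hsum3]
  have c1 : ∑ p, R p j k l 0 * R i p s t 0 = ∑ p, R i p s t 0 * R p j k l 0 :=
    Finset.sum_congr rfl fun p _ => mul_comm _ _
  have c2 : ∑ p, R i j p l 0 * R k p s t 0 = ∑ p, R k p s t 0 * R i j p l 0 :=
    Finset.sum_congr rfl fun p _ => mul_comm _ _
  rw [c1, c2]
  ring
end
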